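/- arXiv:2506.10708 — 3 statements merged into one kernel-verified Lean document; each statement's English description precedes it below -/
import Mathlib

section
/- Let F be a first-order sentence of a signature σ and let c be a list of distinct predicate and function constants of σ (the intensional constants). If F is in Clark normal form relative to c and F is tight on c, then for any interpretation I of σ that satisfies ∃x∃y(x ≠ y), I is a model of SM[F; c] if and only if I is a model of the completion of F relative to c. -/
/-!
A deep embedding of (one-sorted) first-order logic with equality,
following the functional stable model semantics of
Bartholomew & Lee, used by the ASPMT / aspsmt2smt paper.
-/

namespace ASPMT

/-- A first-order signature: function symbols and predicate symbols with arities. -/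
structure Signature where
  Func : Type
  Pred : Type
  funcAr : Func → ℕ
  predAr : Pred → ℕ

variable {σ : Signature}

/-- First-order terms; variables are indexed by natural numbers. -/
inductive Term (σ : Signature) : Type
  | var : ℕ → Term σ
  | app : (f : σ.Func) → (Fin (σ.funcAr f) → Term σ) → Term σ

/-- First-order formulas (with equality). `¬F` is `F.imp falsum`. -/
inductive Formula (σ : Signature) : Type
  | falsum : Formula σ
  | eq : Term σ → Term σ → Formula σ
  | pred : (p : σ.Pred) → (Fin (σ.predAr p) → Term σ) → Formula σ
  | and : Formula σ → Formula σ → Formula σ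
  | or : Formula σ → Formula σ → Formula σ
  | imp : Formula σ → Formula σ → Formula σ
  | all : ℕ → Formula σ → Formula σ
  | ex : ℕ → Formula σ → Formula σ

/-- Negation, as an abbreviation. -/
def Formula.not (F : Formula σ) : Formula σ := F.imp .falsum

/-- An interpretation (structure) for the signature, with nonempty universe. -/
structure Interp (σ : Signature) where
  M : Type
  nonempty : Nonempty M
  funcI : (f : σ.Func) → (Fin (σ.funcAr f) → M) → M
  predI : (p : σ.Pred) → (Fin (σ.predAr p) → M) → Prop

/-- Updating a variable assignment at a variable. -/
def updAssign {α : Type} (ν : ℕ → α) (x : ℕ) (a : α) : ℕ → α :=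
  fun y => if y = x then a else ν y

/-- Evaluation of a term in an interpretation under a variable assignment. -/
def Term.eval (I : Interp σ) (ν : ℕ → I.M) : Term σ → I.M
  | .var x => ν x
  | .app f ts => I.funcI f fun i => (ts i).eval I ν

/-- Tarskian satisfaction. -/
def Formula.Sat (I : Interp σ) : (ν : ℕ → I.M) → Formula σ → Prop
  | _, .falsum => False
  | ν, .eq t u => t.eval I ν = u.eval I ν
  | ν, .pred p ts => I.predI p fun i => (ts i).eval I ν
  | ν, .and F G => F.Sat I ν ∧ G.Sat I ν
  | ν, .or F G => F.Sat I ν ∨ G.Sat I ν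
  | ν, .imp F G => F.Sat I ν → G.Sat I ν
  | ν, .all x F => ∀ a : I.M, F.Sat I (updAssign ν x a)
  | ν, .ex x F => ∃ a : I.M, F.Sat I (updAssign ν x a)

/-- Variables occurring in a term. -/
def Term.vars : Term σ → Set ℕ
  | .var x => {x}
  | .app _ ts => ⋃ i, (ts i).vars

/-- Free variables of a formula. -/
def Formula.fv : Formula σ → Set ℕ
  | .falsum => ∅
  | .eq t u => t.vars ∪ u.vars
  | .pred _ ts => ⋃ i, (ts i).vars
  | .and F G => F.fv ∪ G.fv
  | .or F G => F.fv ∪ G.fv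
  | .imp F G => F.fv ∪ G.fv
  | .all x F => F.fv \ {x}
  | .ex x F => F.fv \ {x}

end ASPMT

namespace ASPMT

variable {σ : Signature}

/-- An alternative interpretation `ĉ` of the intensional constants `c = (cp, cf)`:
it may reinterpret the symbols in `cp`/`cf` but must agree with `I` elsewhere. -/
structure Reinterp (I : Interp σ) (cp : Set σ.Pred) (cf : Set σ.Func) where
  funcI : (f : σ.Func) → (Fin (σ.funcAr f) → I.M) → I.M
  predI : (p : σ.Pred) → (Fin (σ.predAr p) → I.M) → Prop
  func_eq : ∀ f ∉ cf, funcI f = I.funcI f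
  pred_eq : ∀ p ∉ cp, predI p = I.predI p

/-- The interpretation determined by a reinterpretation of intensional constants. -/
def Reinterp.toInterp {I : Interp σ} {cp : Set σ.Pred} {cf : Set σ.Func}
    (J : Reinterp I cp cf) : Interp σ :=
  ⟨I.M, I.nonempty, J.funcI, J.predI⟩

/-- `ĉ < c`: the predicates of `ĉ` are pointwise at most those of `c`
(`ĉ^pred ≤ c^pred`), and `ĉ ≠ c`. -/
def Reinterp.lt {I : Interp σ} {cp : Set σ.Pred} {cf : Set σ.Func}
    (J : Reinterp I cp cf) : Prop :=
  (∀ p args, J.predI p args → I.predI p args) ∧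
    ¬((∀ p, J.predI p = I.predI p) ∧ (∀ f, J.funcI f = I.funcI f))

/-- Satisfaction of `F*(ĉ)`, where the second-order variables `ĉ` are interpreted
by the reinterpretation `J` (for atomic `F`, `F* = F′ ∧ F` where `F′` replaces all
intensional constants with the corresponding variables from `ĉ`). -/
def Formula.StarSat (I : Interp σ) {cp : Set σ.Pred} {cf : Set σ.Func}
    (J : Reinterp I cp cf) : (ν : ℕ → I.M) → Formula σ → Prop
  | _, .falsum => False
  | ν, .eq t u =>
      (t.eval J.toInterp ν = u.eval J.toInterp ν) ∧ (t.eval I ν = u.eval I ν)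
  | ν, .pred p ts =>
      (J.predI p fun i => (ts i).eval J.toInterp ν) ∧
        (I.predI p fun i => (ts i).eval I ν)
  | ν, .and F G => F.StarSat I J ν ∧ G.StarSat I J ν
  | ν, .or F G => F.StarSat I J ν ∨ G.StarSat I J ν
  | ν, .imp F G => (F.StarSat I J ν → G.StarSat I J ν) ∧ (F.Sat I ν → G.Sat I ν)
  | ν, .all x F => ∀ a : I.M, F.StarSat I J (updAssign ν x a)
  | ν, .ex x F => ∃ a : I.M, F.StarSat I J (updAssign ν x a)

/-- `I ⊨ SM[F; c]` where `c = (cp, cf)` is the list of intensional constants: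
`I ⊨ F ∧ ¬∃ĉ(ĉ < c ∧ F*(ĉ))`.  A model of `SM[F; c]` is called a stable model
of `F` relative to `c`. -/
def StableModel (I : Interp σ) (ν : ℕ → I.M) (F : Formula σ)
    (cp : Set σ.Pred) (cf : Set σ.Func) : Prop :=
  F.Sat I ν ∧ ¬∃ J : Reinterp I cp cf, J.lt ∧ F.StarSat I J ν

end ASPMT


namespace ASPMT

variable {σ : Signature}

/-- Truth `⊤ := ¬⊥`. -/
def verum : Formula σ := Formula.falsum.imp .falsum

/-- Conjunction of a finite list of formulas. -/
def bigAnd (l : List (Formula σ)) : Formula σ := l.foldr .and verum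

/-- Disjunction of a finite list of formulas. -/
def bigOr (l : List (Formula σ)) : Formula σ := l.foldr .or .falsum

/-- `∀ x₁ … xₙ F`. -/
def allN (xs : List ℕ) (F : Formula σ) : Formula σ := xs.foldr .all F

/-- `∃ x₁ … xₙ F`. -/
def exN (xs : List ℕ) (F : Formula σ) : Formula σ := xs.foldr .ex F

/-- `F ↔ G` as an abbreviation. -/
def Formula.iff (F G : Formula σ) : Formula σ := (F.imp G).and (G.imp F)

/-- Function symbols occurring in a term. -/
def Term.funcs : Term σ → Set σ.Func
  | .var _ => ∅
  | .app f ts => insert f (⋃ i, (ts i).funcs)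

/-- Function symbols having a strictly positive occurrence in a formula
(an occurrence is strictly positive if it is not in the antecedent of any
implication). -/
def Formula.spFuncs : Formula σ → Set σ.Func
  | .falsum => ∅
  | .eq t u => t.funcs ∪ u.funcs
  | .pred _ ts => ⋃ i, (ts i).funcs
  | .and F G => F.spFuncs ∪ G.spFuncs
  | .or F G => F.spFuncs ∪ G.spFuncs
  | .imp _ G => G.spFuncs
  | .all _ F => F.spFuncs
  | .ex _ F => F.spFuncs

/-- Predicate symbols having a strictly positive occurrence in a formula. -/
def Formula.spPreds : Formula σ → Set σ.Pred
  | .falsum => ∅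
  | .eq _ _ => ∅
  | .pred p _ => {p}
  | .and F G => F.spPreds ∪ G.spPreds
  | .or F G => F.spPreds ∪ G.spPreds
  | .imp _ G => G.spPreds
  | .all _ F => F.spPreds
  | .ex _ F => F.spPreds

/-- The implications `G → H` having a strictly positive occurrence in a formula. -/
def Formula.spImps : Formula σ → Set (Formula σ × Formula σ)
  | .falsum => ∅
  | .eq _ _ => ∅
  | .pred _ _ => ∅
  | .and F G => F.spImps ∪ G.spImps
  | .or F G => F.spImps ∪ G.spImps
  | .imp F G => insert (F, G) G.spImps
  | .all _ F => F.spImps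
  | .ex _ F => F.spImps

/-- A constant (predicate or function symbol) has a strictly positive occurrence
in a formula. -/
def spIn (s : σ.Pred ⊕ σ.Func) (F : Formula σ) : Prop :=
  match s with
  | .inl p => p ∈ F.spPreds
  | .inr f => f ∈ F.spFuncs

/-- Membership of a constant in the list `c = (cp, cf)` of intensional constants. -/
def intensional (cp : Set σ.Pred) (cf : Set σ.Func) : σ.Pred ⊕ σ.Func → Prop
  | .inl p => p ∈ cp
  | .inr f => f ∈ cf

/-- The dependency graph of `F` relative to `c`: its vertices are the members of
`c`, and it has an edge from `c` to `d` if for some strictly positive occurrence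
of `G → H` in `F`, `c` has a strictly positive occurrence in `H` and `d` has a
strictly positive occurrence in `G`. -/
def depEdge (F : Formula σ) (cp : Set σ.Pred) (cf : Set σ.Func)
    (s d : σ.Pred ⊕ σ.Func) : Prop :=
  intensional cp cf s ∧ intensional cp cf d ∧
    ∃ GH ∈ F.spImps, spIn s GH.2 ∧ spIn d GH.1

/-- `F` is tight on `c` if the dependency graph of `F` relative to `c` is acyclic. -/
def Tight (F : Formula σ) (cp : Set σ.Pred) (cf : Set σ.Func) : Prop :=
  ∀ s, ¬ Relation.TransGen (depEdge F cp cf) s s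

/-- A formula in Clark normal form relative to the list `c` of distinct intensional
constants `cps ++ cfs`: a conjunction of sentences `∀x(G → p(x))`, one for each
intensional predicate `p`; `∀x y(G → f(x) = y)`, one for each intensional function
`f`; and constraints `← G`.  The object variables `x` (and `y`) are represented by
the variables `0, …, n-1` (and `n`), and `G` has no free variables other than
those in `x` (and `y`). -/
structure ClarkProgram (σ : Signature) where
  cps : List σ.Pred
  cfs : List σ.Func
  cps_nodup : cps.Nodup
  cfs_nodup : cfs.Nodup
  predDef : σ.Pred → Formula σ
  funcDef : σ.Func → Formula σ
  constraints : List (Formula σ)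
  predDef_fv : ∀ p ∈ cps, (predDef p).fv ⊆ {i | i < σ.predAr p}
  funcDef_fv : ∀ f ∈ cfs, (funcDef f).fv ⊆ {i | i < σ.funcAr f + 1}
  constraints_fv : ∀ G ∈ constraints, G.fv = ∅

/-- The conjunctive term `∀x(G → p(x))` for an intensional predicate `p`. -/
def predRule (P : ClarkProgram σ) (p : σ.Pred) : Formula σ :=
  allN (List.range (σ.predAr p))
    ((P.predDef p).imp (.pred p fun i => .var i.1))

/-- The conjunctive term `∀x y(G → f(x) = y)` for an intensional function `f`. -/
def funcRule (P : ClarkProgram σ) (f : σ.Func) : Formula σ :=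
  allN (List.range (σ.funcAr f + 1))
    ((P.funcDef f).imp (.eq (.app f fun i => .var i.1) (.var (σ.funcAr f))))

/-- The formula `F` in Clark normal form determined by a Clark program. -/
def ClarkProgram.formula (P : ClarkProgram σ) : Formula σ :=
  bigAnd (P.cps.map (predRule P) ++ P.cfs.map (funcRule P) ++
    P.constraints.map fun G => G.imp .falsum)

/-- The conjunctive term `∀x(p(x) ↔ G)` of the completion. -/
def predComp (P : ClarkProgram σ) (p : σ.Pred) : Formula σ :=
  allN (List.range (σ.predAr p))
    ((Formula.pred p fun i => .var i.1).iff (P.predDef p))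

/-- The conjunctive term `∀x y(f(x) = y ↔ G)` of the completion. -/
def funcComp (P : ClarkProgram σ) (f : σ.Func) : Formula σ :=
  allN (List.range (σ.funcAr f + 1))
    ((Formula.eq (.app f fun i => .var i.1) (.var (σ.funcAr f))).iff (P.funcDef f))

/-- The completion of `F` relative to `c`: each `∀x(G → p(x))` is replaced by
`∀x(p(x) ↔ G)`, each `∀x y(G → f(x) = y)` by `∀x y(f(x) = y ↔ G)`, and each
constraint `← G` by `¬G`. -/
def ClarkProgram.completion (P : ClarkProgram σ) : Formula σ :=
  bigAnd (P.cps.map (predComp P) ++ P.cfs.map (funcComp P) ++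
    P.constraints.map Formula.not)

end ASPMT

/-!
For a Clark normal form, `F*(ĉ)` says that `F` holds and that `ĉ` satisfies every rule whose
body holds in the starred sense.  If `I` is stable but some `p(a)` (or `f(a) = b`) of the
completion has a false body, deleting `p(a)` (or moving `f(a)` to another value, which needs a
second element) gives a smaller `ĉ` with `F*(ĉ)`.  Conversely, if `I` satisfies the completion
and `ĉ < c` satisfies `F*(ĉ)`, tightness provides a symbol `m` on which `ĉ` and `I` differ while
they agree on every intensional symbol occurring strictly positively in the body of `m`'s rule;
that body then holds in the starred sense wherever it holds in `I`, which forces `ĉ` to agree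
with `I` on `m`.
-/

theorem Set.Finite.exists_forall_not_rel_of_acyclic {α : Type*} {r : α → α → Prop}
    {s : Set α} (hfin : s.Finite) (hne : s.Nonempty) (hacyc : ∀ a, ¬ Relation.TransGen r a a) :
    ∃ m ∈ s, ∀ x ∈ s, ¬ r m x := by
  have := hfin.to_subtype
  let r' : s → s → Prop := fun a b => Relation.TransGen r b a
  have : IsTrans s r' := ⟨fun _ _ _ h₁ h₂ => h₂.trans h₁⟩
  have : Std.Irrefl r' := ⟨fun a => hacyc a⟩
  obtain ⟨d, hd⟩ := hne
  obtain ⟨m, -, hm⟩ :=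
    (Finite.wellFounded_of_trans_of_irrefl r').has_min Set.univ ⟨⟨d, hd⟩, trivial⟩
  exact ⟨m, m.2, fun x hx hmx => hm ⟨x, hx⟩ trivial (.single hmx)⟩

namespace ASPMT

variable {σ : Signature}

section Assignments

variable {M : Type}

def setArgs (ν : ℕ → M) (n : ℕ) (args : Fin n → M) : ℕ → M :=
  fun k => if h : k < n then args ⟨k, h⟩ else ν k

@[simp]
theorem setArgs_val (ν : ℕ → M) {n : ℕ} (args : Fin n → M) (i : Fin n) :
    setArgs ν n args i = args i := by
  simp [setArgs]

@[simp]
theorem setArgs_snoc_val (ν : ℕ → M) {n : ℕ} (args : Fin n → M) (y : M) (i : Fin n) :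
    setArgs ν (n + 1) (Fin.snoc args y) i = args i := by
  simp [setArgs, Fin.snoc, Nat.lt_succ_of_lt i.2]

@[simp]
theorem setArgs_snoc_last (ν : ℕ → M) {n : ℕ} (args : Fin n → M) (y : M) :
    setArgs ν (n + 1) (Fin.snoc args y) n = y := by
  simp [setArgs, Fin.snoc]

theorem forall_agreeOff_nil {ν : ℕ → M} {Q : (ℕ → M) → Prop} :
    (∀ ν' : ℕ → M, (∀ y ∉ ([] : List ℕ), ν' y = ν y) → Q ν') ↔ Q ν :=
  ⟨fun h => h ν fun _ _ => rfl,
    fun h _ hν' => funext (fun y => hν' y List.not_mem_nil) ▸ h⟩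

theorem forall_updAssign_agreeOff {ν : ℕ → M} {x : ℕ} {xs : List ℕ}
    {Q : (ℕ → M) → Prop} :
    (∀ a, ∀ ν' : ℕ → M, (∀ y ∉ xs, ν' y = updAssign ν x a y) → Q ν') ↔
      ∀ ν' : ℕ → M, (∀ y ∉ x :: xs, ν' y = ν y) → Q ν' := by
  constructor
  · intro h ν' hν'
    refine h (ν' x) ν' fun y hy => ?_
    by_cases hyx : y = x
    · simp [updAssign, hyx]
    · simpa [updAssign, hyx] using hν' y (by simp [hyx, hy])
  · intro h a ν' hν'
    refine h ν' fun y hy => ?_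
    have hyx : y ≠ x := fun e => hy (by simp [e])
    simpa [updAssign, hyx] using hν' y fun e => hy (List.mem_cons_of_mem _ e)

theorem forall_agreeOff_range {ν : ℕ → M} {n : ℕ} {Q : (ℕ → M) → Prop} :
    (∀ ν' : ℕ → M, (∀ y ∉ List.range n, ν' y = ν y) → Q ν') ↔
      ∀ args : Fin n → M, Q (setArgs ν n args) := by
  refine ⟨fun h args => h _ fun y hy => ?_, fun h ν' hν' => ?_⟩
  · simp_all [setArgs]
  · convert h fun i => ν' i
    funext k
    by_cases hk : k < n
    · simp [setArgs, hk]
    · simp [setArgs, hk, hν' k (by simpa using hk)]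

theorem forall_snoc {n : ℕ} {Q : (Fin (n + 1) → M) → Prop} :
    (∀ b, Q b) ↔ ∀ args y, Q (Fin.snoc args y) :=
  ⟨fun h _ _ => h _, fun h b => by simpa using h (Fin.init b) (b (Fin.last n))⟩

end Assignments

section Satisfaction

variable {I : Interp σ} {cp : Set σ.Pred} {cf : Set σ.Func}

theorem Formula.StarSat.sat {J : Reinterp I cp cf} :
    ∀ {F : Formula σ} {ν : ℕ → I.M}, F.StarSat I J ν → F.Sat I ν
  | .falsum, _, h => h
  | .eq _ _, _, h => h.2
  | .pred _ _, _, h => h.2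
  | .and _ _, _, h => ⟨h.1.sat, h.2.sat⟩
  | .or _ _, _, h => h.imp (·.sat) (·.sat)
  | .imp _ _, _, h => h.2
  | .all _ _, _, h => fun a => (h a).sat
  | .ex _ _, _, h => h.imp fun _ h => h.sat

theorem Term.eval_toInterp (J : Reinterp I cp cf) {ν : ℕ → I.M} :
    ∀ t : Term σ, (∀ f ∈ t.funcs, J.funcI f = I.funcI f) →
      t.eval J.toInterp ν = t.eval I ν
  | .var _, _ => rfl
  | .app f ts, h => by
      change J.funcI f _ = I.funcI f _
      rw [h f (Set.mem_insert _ _)]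
      congr 1
      funext i
      exact Term.eval_toInterp J (ts i) fun g hg =>
        h g (Set.mem_insert_of_mem _ (Set.mem_iUnion.mpr ⟨i, hg⟩))

/-- Antecedents of implications need no agreement with `I`, since `G*` always implies `G`. -/
theorem Formula.starSat_of_sat {J : Reinterp I cp cf} :
    ∀ (F : Formula σ) {ν : ℕ → I.M}, (∀ p ∈ F.spPreds, J.predI p = I.predI p) →
      (∀ f ∈ F.spFuncs, J.funcI f = I.funcI f) → F.Sat I ν → F.StarSat I J ν
  | .falsum, _, _, _, h => h
  | .eq t u, _, _, hf, h => by
      refine ⟨?_, h⟩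
      rwa [Term.eval_toInterp J t fun g hg => hf g (Or.inl hg),
        Term.eval_toInterp J u fun g hg => hf g (Or.inr hg)]
  | .pred p ts, _, hp, hf, h => by
      refine ⟨?_, h⟩
      rwa [hp p rfl, funext fun i =>
        Term.eval_toInterp J (ts i) fun g hg => hf g (Set.mem_iUnion.mpr ⟨i, hg⟩)]
  | .and F G, _, hp, hf, h =>
      ⟨F.starSat_of_sat (fun p h' => hp p (Or.inl h')) (fun f h' => hf f (Or.inl h')) h.1,
        G.starSat_of_sat (fun p h' => hp p (Or.inr h')) (fun f h' => hf f (Or.inr h')) h.2⟩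
  | .or F G, _, hp, hf, h =>
      h.imp (F.starSat_of_sat (fun p h' => hp p (Or.inl h')) (fun f h' => hf f (Or.inl h')))
        (G.starSat_of_sat (fun p h' => hp p (Or.inr h')) (fun f h' => hf f (Or.inr h')))
  | .imp _ G, _, hp, hf, h => ⟨fun hs => G.starSat_of_sat hp hf (h hs.sat), h⟩
  | .all _ F, _, hp, hf, h => fun a => F.starSat_of_sat hp hf (h a)
  | .ex _ F, _, hp, hf, h => h.imp fun _ => F.starSat_of_sat hp hf

theorem sat_bigAnd {ν : ℕ → I.M} {l : List (Formula σ)} :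
    (bigAnd l).Sat I ν ↔ ∀ G ∈ l, G.Sat I ν := by
  induction l with
  | nil => simp [bigAnd, verum, Formula.Sat]
  | cons G l ih => simp [← ih, bigAnd, Formula.Sat]

theorem starSat_bigAnd {J : Reinterp I cp cf} {ν : ℕ → I.M} {l : List (Formula σ)} :
    (bigAnd l).StarSat I J ν ↔ ∀ G ∈ l, G.StarSat I J ν := by
  induction l with
  | nil => simp [bigAnd, verum, Formula.StarSat, Formula.Sat]
  | cons G l ih => simp [← ih, bigAnd, Formula.StarSat]

theorem sat_allN {F : Formula σ} {xs : List ℕ} {ν : ℕ → I.M} :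
    (allN xs F).Sat I ν ↔
      ∀ ν' : ℕ → I.M, (∀ y ∉ xs, ν' y = ν y) → F.Sat I ν' := by
  induction xs generalizing ν with
  | nil => exact (forall_agreeOff_nil (Q := (F.Sat I ·))).symm
  | cons x xs ih =>
    simp only [allN, List.foldr, Formula.Sat] at ih ⊢
    simp only [ih]
    exact forall_updAssign_agreeOff

theorem starSat_allN {J : Reinterp I cp cf} {F : Formula σ} {xs : List ℕ} {ν : ℕ → I.M} :
    (allN xs F).StarSat I J ν ↔
      ∀ ν' : ℕ → I.M, (∀ y ∉ xs, ν' y = ν y) → F.StarSat I J ν' := by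
  induction xs generalizing ν with
  | nil => exact (forall_agreeOff_nil (Q := (F.StarSat I J ·))).symm
  | cons x xs ih =>
    simp only [allN, List.foldr, Formula.StarSat] at ih ⊢
    simp only [ih]
    exact forall_updAssign_agreeOff

theorem sat_allN_range {F : Formula σ} {n : ℕ} {ν : ℕ → I.M} :
    (allN (List.range n) F).Sat I ν ↔ ∀ args, F.Sat I (setArgs ν n args) :=
  sat_allN.trans forall_agreeOff_range

theorem starSat_allN_range {J : Reinterp I cp cf} {F : Formula σ} {n : ℕ} {ν : ℕ → I.M} :
    (allN (List.range n) F).StarSat I J ν ↔ ∀ args, F.StarSat I J (setArgs ν n args) :=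
  starSat_allN.trans forall_agreeOff_range

end Satisfaction

theorem spImps_allN {F : Formula σ} : ∀ {xs : List ℕ}, (allN xs F).spImps = F.spImps
  | [] => rfl
  | _ :: xs => spImps_allN (xs := xs)

theorem mem_spImps_bigAnd {l : List (Formula σ)} {G : Formula σ} (hG : G ∈ l)
    {x : Formula σ × Formula σ} (hx : x ∈ G.spImps) : x ∈ (bigAnd l).spImps := by
  induction l with
  | nil => simp at hG
  | cons H l ih =>
    rcases List.mem_cons.mp hG with rfl | hG
    · exact Or.inl hx
    · exact Or.inr (ih hG)

theorem finite_setOf_intensional {cp : Set σ.Pred} {cf : Set σ.Func} (hcp : cp.Finite)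
    (hcf : cf.Finite) : {s | intensional cp cf s}.Finite := by
  refine ((hcp.image Sum.inl).union (hcf.image Sum.inr)).subset ?_
  rintro (p | f) h
  · exact Or.inl ⟨p, h, rfl⟩
  · exact Or.inr ⟨f, h, rfl⟩

namespace Reinterp

variable {I : Interp σ} {cp : Set σ.Pred} {cf : Set σ.Func}

open Classical in
noncomputable def updatePred {p : σ.Pred} (hp : p ∈ cp)
    (R : (Fin (σ.predAr p) → I.M) → Prop) :
    Reinterp I cp cf where
  funcI := I.funcI
  predI := Function.update I.predI p R
  func_eq _ _ := rfl
  pred_eq _ hq := Function.update_of_ne (ne_of_mem_of_not_mem hp hq).symm _ _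

open Classical in
noncomputable def updateFunc {f : σ.Func} (hf : f ∈ cf)
    (g : (Fin (σ.funcAr f) → I.M) → I.M) :
    Reinterp I cp cf where
  funcI := Function.update I.funcI f g
  predI := I.predI
  func_eq _ hg := Function.update_of_ne (ne_of_mem_of_not_mem hf hg).symm _ _
  pred_eq _ _ := rfl

theorem updatePred_lt {p : σ.Pred} (hp : p ∈ cp) {R : (Fin (σ.predAr p) → I.M) → Prop}
    (hR : ∀ args, R args → I.predI p args) (hne : R ≠ I.predI p) :
    (updatePred (cf := cf) hp R).lt := by
  classical
  refine ⟨fun q args h => ?_, fun ⟨h, _⟩ => hne (by simpa [updatePred] using h p)⟩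
  by_cases hqp : q = p
  · subst hqp
    exact hR args (by simpa [updatePred] using h)
  · simpa [updatePred, Function.update_of_ne hqp] using h

theorem updateFunc_lt {f : σ.Func} (hf : f ∈ cf) {g : (Fin (σ.funcAr f) → I.M) → I.M}
    (hne : g ≠ I.funcI f) : (updateFunc (cp := cp) hf g).lt :=
  ⟨fun _ _ h => h, fun ⟨_, h⟩ => hne (by simpa [updateFunc] using h f)⟩

def Differs (J : Reinterp I cp cf) : σ.Pred ⊕ σ.Func → Prop
  | .inl p => J.predI p ≠ I.predI p
  | .inr f => J.funcI f ≠ I.funcI f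

theorem Differs.intensional {J : Reinterp I cp cf} :
    ∀ {s : σ.Pred ⊕ σ.Func}, J.Differs s → intensional cp cf s
  | .inl p, h => by_contra fun hp => h (J.pred_eq p hp)
  | .inr f, h => by_contra fun hf => h (J.func_eq f hf)

theorem exists_differs_of_lt {J : Reinterp I cp cf} (h : J.lt) : ∃ s, J.Differs s := by
  by_contra hno
  exact h.2 ⟨fun p => by_contra fun hp => hno ⟨.inl p, hp⟩,
    fun f => by_contra fun hf => hno ⟨.inr f, hf⟩⟩

theorem agreeOn_of_forall_not_depEdge {F : Formula σ} {J : Reinterp I cp cf}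
    {m : σ.Pred ⊕ σ.Func} (hm : intensional cp cf m)
    (hmin : ∀ d, J.Differs d → ¬ depEdge F cp cf m d) {G H : Formula σ}
    (hGH : (G, H) ∈ F.spImps) (hmH : spIn m H) :
    (∀ q ∈ G.spPreds, J.predI q = I.predI q) ∧ (∀ g ∈ G.spFuncs, J.funcI g = I.funcI g) :=
  ⟨fun q hq => by_contra fun hne =>
      hmin (.inl q) hne ⟨hm, Differs.intensional (s := .inl q) hne, (G, H), hGH, hmH, hq⟩,
    fun g hg => by_contra fun hne =>
      hmin (.inr g) hne ⟨hm, Differs.intensional (s := .inr g) hne, (G, H), hGH, hmH, hg⟩⟩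

end Reinterp

namespace ClarkProgram

variable (P : ClarkProgram σ) {I : Interp σ} {ν : ℕ → I.M}

theorem sat_formula_iff :
    P.formula.Sat I ν ↔
      (∀ p ∈ P.cps, ∀ args,
        (P.predDef p).Sat I (setArgs ν _ args) → I.predI p args) ∧
      (∀ f ∈ P.cfs, ∀ args y,
        (P.funcDef f).Sat I (setArgs ν _ (Fin.snoc args y)) → I.funcI f args = y) ∧
      (∀ G ∈ P.constraints, ¬ G.Sat I ν) := by
  simp only [formula, sat_bigAnd, List.forall_mem_append, List.forall_mem_map, predRule,
    funcRule, sat_allN_range, forall_snoc, Formula.Sat, Term.eval, setArgs_val,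
    setArgs_snoc_val, setArgs_snoc_last, and_assoc]

theorem sat_completion_iff :
    P.completion.Sat I ν ↔
      (∀ p ∈ P.cps, ∀ args,
        I.predI p args ↔ (P.predDef p).Sat I (setArgs ν _ args)) ∧
      (∀ f ∈ P.cfs, ∀ args y,
        I.funcI f args = y ↔ (P.funcDef f).Sat I (setArgs ν _ (Fin.snoc args y))) ∧
      (∀ G ∈ P.constraints, ¬ G.Sat I ν) := by
  simp only [completion, sat_bigAnd, List.forall_mem_append, List.forall_mem_map, predComp,
    funcComp, sat_allN_range, forall_snoc, Formula.iff, Formula.not, Formula.Sat, Term.eval,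
    setArgs_val, setArgs_snoc_val, setArgs_snoc_last, and_assoc, iff_def]

theorem starSat_formula_iff {cp : Set σ.Pred} {cf : Set σ.Func} (J : Reinterp I cp cf) :
    P.formula.StarSat I J ν ↔ P.formula.Sat I ν ∧
      (∀ p ∈ P.cps, ∀ args,
        (P.predDef p).StarSat I J (setArgs ν _ args) → J.predI p args) ∧
      (∀ f ∈ P.cfs, ∀ args y,
        (P.funcDef f).StarSat I J (setArgs ν _ (Fin.snoc args y)) → J.funcI f args = y) := by
  rw [P.sat_formula_iff]
  simp only [formula, starSat_bigAnd, List.forall_mem_append,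
    List.forall_mem_map, predRule, funcRule, starSat_allN_range, forall_snoc, Formula.StarSat,
    Formula.Sat, Term.eval, setArgs_val, setArgs_snoc_val, setArgs_snoc_last, and_assoc]
  constructor
  · rintro ⟨hp, hf, hc⟩
    exact ⟨fun p h args => (hp p h args).2, fun f h args y => (hf f h args y).2,
      fun G h => (hc G h).2, fun p h args hs => ((hp p h args).1 hs).1,
      fun f h args y hs => ((hf f h args y).1 hs).1⟩
  · rintro ⟨hp, hf, hc, hpJ, hfJ⟩
    exact ⟨fun p h args => ⟨fun hs => ⟨hpJ p h args hs, hp p h args hs.sat⟩, hp p h args⟩,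
      fun f h args y =>
        ⟨fun hs => ⟨hfJ f h args y hs, hf f h args y hs.sat⟩, hf f h args y⟩,
      fun G h => ⟨fun hs => hc G h hs.sat, hc G h⟩⟩

theorem sat_formula_of_sat_completion (h : P.completion.Sat I ν) : P.formula.Sat I ν := by
  obtain ⟨hp, hf, hc⟩ := P.sat_completion_iff.mp h
  exact P.sat_formula_iff.mpr
    ⟨fun p h' args => (hp p h' args).mpr, fun f h' args y => (hf f h' args y).mpr, hc⟩

theorem mem_spImps_formula_of_pred {p : σ.Pred} (hp : p ∈ P.cps) :
    (P.predDef p, Formula.pred p fun i => .var i.1) ∈ P.formula.spImps := by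
  refine mem_spImps_bigAnd (List.mem_append_left _ (List.mem_append_left _
    (List.mem_map_of_mem hp))) ?_
  rw [predRule, spImps_allN]
  exact Set.mem_insert _ _

theorem mem_spImps_formula_of_func {f : σ.Func} (hf : f ∈ P.cfs) :
    (P.funcDef f, Formula.eq (.app f fun i => .var i.1) (.var (σ.funcAr f))) ∈
      P.formula.spImps := by
  refine mem_spImps_bigAnd (List.mem_append_left _ (List.mem_append_right _
    (List.mem_map_of_mem hf))) ?_
  rw [funcRule, spImps_allN]
  exact Set.mem_insert _ _

theorem exists_lt_starSat_of_not_predDef (hF : P.formula.Sat I ν) {p : σ.Pred} (hp : p ∈ P.cps)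
    {args : Fin (σ.predAr p) → I.M} (hpa : I.predI p args)
    (hG : ¬ (P.predDef p).Sat I (setArgs ν _ args)) :
    ∃ J : Reinterp I {p | p ∈ P.cps} {f | f ∈ P.cfs}, J.lt ∧ P.formula.StarSat I J ν := by
  classical
  obtain ⟨hrp, hrf, -⟩ := P.sat_formula_iff.mp hF
  refine ⟨Reinterp.updatePred hp fun b => I.predI p b ∧ b ≠ args,
    Reinterp.updatePred_lt _ (fun _ h => h.1) fun e => ?_,
    (P.starSat_formula_iff _).mpr
      ⟨hF, fun q hq b hs => ?_, fun g hg b y hs => hrf g hg b y hs.sat⟩⟩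
  · exact (cast (congrFun e args).symm hpa).2 rfl
  · have hqb := hrp q hq b hs.sat
    by_cases hqp : q = p
    · subst hqp
      simp only [Reinterp.updatePred, Function.update_self]
      exact ⟨hqb, by rintro rfl; exact hG hs.sat⟩
    · simpa [Reinterp.updatePred, Function.update_of_ne hqp] using hqb

theorem exists_lt_starSat_of_not_funcDef [Nontrivial I.M] (hF : P.formula.Sat I ν) {f : σ.Func}
    (hf : f ∈ P.cfs) {args : Fin (σ.funcAr f) → I.M}
    (hG : ¬ (P.funcDef f).Sat I (setArgs ν _ (Fin.snoc args (I.funcI f args)))) :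
    ∃ J : Reinterp I {p | p ∈ P.cps} {f | f ∈ P.cfs}, J.lt ∧ P.formula.StarSat I J ν := by
  classical
  obtain ⟨hrp, hrf, -⟩ := P.sat_formula_iff.mp hF
  obtain ⟨z, hz⟩ := exists_ne (I.funcI f args)
  refine ⟨Reinterp.updateFunc hf (Function.update (I.funcI f) args z),
    Reinterp.updateFunc_lt _ fun e => hz (by simpa using congrFun e args),
    (P.starSat_formula_iff _).mpr
      ⟨hF, fun q hq b hs => hrp q hq b hs.sat, fun g hg b y hs => ?_⟩⟩
  have hgy := hrf g hg b y hs.sat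
  by_cases hgf : g = f
  · subst hgf
    by_cases hb : b = args
    · subst hb hgy
      exact absurd hs.sat hG
    · simpa [Reinterp.updateFunc, Function.update_of_ne hb] using hgy
  · simpa [Reinterp.updateFunc, Function.update_of_ne hgf] using hgy

theorem sat_completion_of_stableModel [Nontrivial I.M]
    (h : StableModel I ν P.formula {p | p ∈ P.cps} {f | f ∈ P.cfs}) :
    P.completion.Sat I ν := by
  obtain ⟨hF, hmin⟩ := h
  obtain ⟨hrp, hrf, hc⟩ := P.sat_formula_iff.mp hF
  refine P.sat_completion_iff.mpr ⟨fun p hp args => ⟨fun hpa => ?_, hrp p hp args⟩,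
    fun f hf args y => ⟨fun hfy => ?_, hrf f hf args y⟩, hc⟩
  · by_contra hG
    exact hmin (P.exists_lt_starSat_of_not_predDef hF hp hpa hG)
  · subst hfy
    by_contra hG
    exact hmin (P.exists_lt_starSat_of_not_funcDef hF hf hG)

variable {cp : Set σ.Pred} {cf : Set σ.Func} {J : Reinterp I cp cf}

theorem predI_eq_of_agreeOn_predDef (hcomp : P.completion.Sat I ν)
    (hle : ∀ p args, J.predI p args → I.predI p args) (hstar : P.formula.StarSat I J ν)
    {p : σ.Pred} (hp : p ∈ P.cps)
    (hpreds : ∀ q ∈ (P.predDef p).spPreds, J.predI q = I.predI q)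
    (hfuncs : ∀ g ∈ (P.predDef p).spFuncs, J.funcI g = I.funcI g) : J.predI p = I.predI p := by
  obtain ⟨hcp, -, -⟩ := P.sat_completion_iff.mp hcomp
  obtain ⟨-, hJp, -⟩ := (P.starSat_formula_iff J).mp hstar
  funext args
  exact propext ⟨hle p args, fun h =>
    hJp p hp args ((P.predDef p).starSat_of_sat hpreds hfuncs ((hcp p hp args).mp h))⟩

theorem funcI_eq_of_agreeOn_funcDef (hcomp : P.completion.Sat I ν)
    (hstar : P.formula.StarSat I J ν) {f : σ.Func} (hf : f ∈ P.cfs)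
    (hpreds : ∀ q ∈ (P.funcDef f).spPreds, J.predI q = I.predI q)
    (hfuncs : ∀ g ∈ (P.funcDef f).spFuncs, J.funcI g = I.funcI g) : J.funcI f = I.funcI f := by
  obtain ⟨-, hcf, -⟩ := P.sat_completion_iff.mp hcomp
  obtain ⟨-, -, hJf⟩ := (P.starSat_formula_iff J).mp hstar
  funext args
  exact hJf f hf args _ ((P.funcDef f).starSat_of_sat hpreds hfuncs ((hcf f hf args _).mp rfl))

theorem stableModel_of_sat_completion (htight : Tight P.formula {p | p ∈ P.cps} {f | f ∈ P.cfs})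
    (h : P.completion.Sat I ν) :
    StableModel I ν P.formula {p | p ∈ P.cps} {f | f ∈ P.cfs} := by
  refine ⟨P.sat_formula_of_sat_completion h, ?_⟩
  rintro ⟨J, hlt, hstar⟩
  have hfin : {s | J.Differs s}.Finite :=
    (finite_setOf_intensional P.cps.finite_toSet P.cfs.finite_toSet).subset
      fun _ => Reinterp.Differs.intensional
  obtain ⟨m, hm : J.Differs m, hmin⟩ :=
    hfin.exists_forall_not_rel_of_acyclic (Reinterp.exists_differs_of_lt hlt) htight
  rcases m with p | f
  · obtain ⟨hpreds, hfuncs⟩ := Reinterp.agreeOn_of_forall_not_depEdge hm.intensional hmin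
      (P.mem_spImps_formula_of_pred hm.intensional) rfl
    exact hm (P.predI_eq_of_agreeOn_predDef h hlt.1 hstar hm.intensional hpreds hfuncs)
  · obtain ⟨hpreds, hfuncs⟩ := Reinterp.agreeOn_of_forall_not_depEdge hm.intensional hmin
      (P.mem_spImps_formula_of_func hm.intensional) (Or.inl (Set.mem_insert _ _))
    exact hm (P.funcI_eq_of_agreeOn_funcDef h hstar hm.intensional hpreds hfuncs)

end ClarkProgram

/-- Theorem on Completion: Let `F` be a first-order sentence of a
signature `σ` and let `c` be a list of distinct predicate and function constants of
`σ` (the intensional constants).  If `F` is in Clark normal form relative to `c`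
and `F` is tight on `c`, then for any interpretation `I` of `σ` that satisfies
`∃x∃y(x ≠ y)`, `I` is a model of `SM[F; c]` if and only if `I` is a model of the
completion of `F` relative to `c`. -/
theorem completion_theorem {σ : Signature} (P : ClarkProgram σ)
    (htight : Tight P.formula {p | p ∈ P.cps} {f | f ∈ P.cfs})
    (I : Interp σ) (hI : ∃ a b : I.M, a ≠ b) (ν : ℕ → I.M) :
    StableModel I ν P.formula {p | p ∈ P.cps} {f | f ∈ P.cfs} ↔
      P.completion.Sat I ν := by
  have : Nontrivial I.M := nontrivial_iff.mpr hI
  exact ⟨P.sat_completion_of_stableModel, P.stableModel_of_sat_completion htight⟩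

end ASPMT
end

section
/- For any list c of intensional constants containing the function constant f (of sort matching the value v), any formula G, and any context, the rule {f = v} ← G is strongly equivalent to the rule f = v ← G ∧ ¬¬(f = v) under the functional stable model semantics: for every formula H and every list c of intensional constants, the formula H ∧ ({f = v} ← G) and the formula H ∧ (f = v ← G ∧ ¬¬(f = v)) have the same stable models relative to c. -/
namespace ASPMT

/-- For any list `c` of intensional constants containing the function
constant `f`, any formula `G`, and any context, the rule `{f = v} ← G` is strongly
equivalent to the rule `f = v ← G ∧ ¬¬(f = v)` under the functional stable model
semantics: for every formula `H` and every list `c` of intensional constants,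
`H ∧ ({f = v} ← G)` and `H ∧ (f = v ← G ∧ ¬¬(f = v))` have the same stable models
relative to `c`.  Here `{f = v}` abbreviates `(f = v) ∨ ¬(f = v)`, `G ← F` stands
for the universal closure of `F → G` (here: `∀v`, as `v` is the only free variable),
and `f` is a (0-ary) function constant. -/
theorem choice_rule_strongly_equivalent {σ : Signature}
    (f : σ.Func) (har : σ.funcAr f = 0) (v : ℕ)
    (G : Formula σ) (hG : G.fv ⊆ {v})
    (H : Formula σ) (cp : Set σ.Pred) (cf : Set σ.Func) (hf : f ∈ cf)
    (I : Interp σ) (ν : ℕ → I.M) :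
    -- the term `f` and the atom `f = v`
    let fT : Term σ := .app f fun i => Fin.elim0 (Fin.cast har i)
    let e : Formula σ := .eq fT (.var v)
    -- `{f = v} ← G`, universally closed
    let rule₁ : Formula σ := .all v (G.imp (e.or e.not))
    -- `f = v ← G ∧ ¬¬(f = v)`, universally closed
    let rule₂ : Formula σ := .all v ((G.and e.not.not).imp e)
    (StableModel I ν (H.and rule₁) cp cf ↔ StableModel I ν (H.and rule₂) cp cf) := by
  intro fT e rule₁ rule₂
  have hsat : ∀ (μ : ℕ → I.M), rule₁.Sat I μ ↔ rule₂.Sat I μ := by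
    intro μ
    simp only [rule₁, rule₂, Formula.Sat, Formula.not]
    constructor
    · intro _ a ⟨_, hnn⟩
      by_contra h
      exact hnn fun he => h he
    · intro _ a _
      by_cases h : e.Sat I (updAssign μ v a)
      · exact Or.inl h
      · exact Or.inr fun he => (h he).elim
  have hstar : ∀ (J : Reinterp I cp cf) (μ : ℕ → I.M),
      rule₁.StarSat I J μ ↔ rule₂.StarSat I J μ := by
    intro J μ
    simp only [rule₁, rule₂, Formula.StarSat, Formula.Sat, Formula.not]
    constructor <;> intro h a <;> have := h a <;> tauto
  constructor <;> rintro ⟨⟨hH, hR⟩, hns⟩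
  · refine ⟨⟨hH, (hsat ν).1 hR⟩, fun ⟨J, hlt, hsH, hsR⟩ => hns ⟨J, hlt, hsH, (hstar J ν).2 hsR⟩⟩
  · refine ⟨⟨hH, (hsat ν).2 hR⟩, fun ⟨J, hlt, hsH, hsR⟩ => hns ⟨J, hlt, hsH, (hstar J ν).1 hsR⟩⟩

end ASPMT
end

section
/- Let D be a conjunction of possibly negated atomic formulas of a first-order signature such that every variable occurring in D occurs in some non-negated conjunct of the form x = t or t = x, and such that the variable dependency graph of D is acyclic. Then the substitution process that, while some variable x remains in D, selects a non-negated conjunct x = t or t = x of D such that no variable occurring in t depends on x and replaces D by D^x_t (the result of substituting t for every occurrence of x in D), terminates after finitely many steps in a formula containing no variables, and the existential closure of D is logically equivalent to the resulting variable-free formula. -/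
namespace ASPMT

variable {σ : Signature}

/-- Substitution of a term `t` for a variable `x` in a term. -/
def Term.subst : Term σ → ℕ → Term σ → Term σ
  | .var y, x, t => if y = x then t else .var y
  | .app f ts, x, t => .app f fun i => (ts i).subst x t

/-- Atomic formulas. -/
inductive Atom (σ : Signature) : Type
  | eq : Term σ → Term σ → Atom σ
  | pred : (p : σ.Pred) → (Fin (σ.predAr p) → Term σ) → Atom σ

/-- A literal: an atomic formula, possibly preceded with `¬` (`pos = false`). -/
structure Lit (σ : Signature) where
  atom : Atom σ
  pos : Bool

/-- A conjunction `C₁ ∧ … ∧ Cₙ` of possibly negated atomic formulas. -/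
abbrev Conj (σ : Signature) := List (Lit σ)

/-- Variables occurring in an atomic formula. -/
def Atom.vars : Atom σ → Set ℕ
  | .eq t u => t.vars ∪ u.vars
  | .pred _ ts => ⋃ i, (ts i).vars

/-- Variables occurring in a literal. -/
def Lit.vars (l : Lit σ) : Set ℕ := l.atom.vars

/-- Variables occurring in a conjunction of literals. -/
def conjVars (L : Conj σ) : Set ℕ := {x | ∃ l ∈ L, x ∈ l.vars}

/-- Substitution in an atomic formula. -/
def Atom.subst : Atom σ → ℕ → Term σ → Atom σ
  | .eq a b, x, t => .eq (a.subst x t) (b.subst x t)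
  | .pred p ts, x, t => .pred p fun i => (ts i).subst x t

/-- Substitution in a literal. -/
def Lit.subst (l : Lit σ) (x : ℕ) (t : Term σ) : Lit σ := ⟨l.atom.subst x t, l.pos⟩

/-- `D^x_t`: the result of substituting `t` for every occurrence of the variable
`x` in the conjunction `D`. -/
def conjSubst (x : ℕ) (t : Term σ) (L : Conj σ) : Conj σ := L.map (Lit.subst · x t)

/-- The literal `l` is a non-negated conjunct of the form `x = t` or `t = x`. -/
def isolator (x : ℕ) (l : Lit σ) : Prop :=
  l.pos = true ∧ ∃ t : Term σ, l.atom = .eq (.var x) t ∨ l.atom = .eq t (.var x)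

/-- The edge relation of the variable dependency graph of a conjunction `L`:
there is an edge from `v` to `u` if some conjunct of `L` is `v = t` or `t = v`
for a term `t` in which `u` appears. -/
def depEdgeC (L : Conj σ) (v u : ℕ) : Prop :=
  ∃ l ∈ L, l.pos = true ∧ ∃ t : Term σ,
    (l.atom = .eq (.var v) t ∨ l.atom = .eq t (.var v)) ∧ u ∈ t.vars

/-- `v` depends on `u`: there is a directed path (of length ≥ 1) from `v` to `u`
in the variable dependency graph of `L`. -/
def dependsOn (L : Conj σ) : ℕ → ℕ → Prop := Relation.TransGen (depEdgeC L)

/-- The variable dependency graph of `L` is acyclic. -/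
def AcyclicDeps (L : Conj σ) : Prop := ∀ v, ¬ dependsOn L v v

/-- One step of the substitution process: select a variable `x` still occurring in
`L` and a non-negated conjunct `x = t` or `t = x` of `L` such that no variable
occurring in `t` depends on `x`, and replace `L` by `L^x_t`. -/
def SubstStep (L L' : Conj σ) : Prop :=
  ∃ x ∈ conjVars L, ∃ t : Term σ,
    (∃ l ∈ L, l.pos = true ∧ (l.atom = .eq (.var x) t ∨ l.atom = .eq t (.var x))) ∧
    (∀ u ∈ t.vars, ¬ dependsOn L u x) ∧
    L' = conjSubst x t L

/-- Satisfaction of an atomic formula. -/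
def Atom.SatA (I : Interp σ) (ν : ℕ → I.M) : Atom σ → Prop
  | .eq t u => t.eval I ν = u.eval I ν
  | .pred p ts => I.predI p fun i => (ts i).eval I ν

/-- Satisfaction of a literal. -/
def Lit.SatL (I : Interp σ) (ν : ℕ → I.M) (l : Lit σ) : Prop :=
  if l.pos then l.atom.SatA I ν else ¬ l.atom.SatA I ν

/-- Satisfaction of a conjunction of literals. -/
def SatConj (I : Interp σ) (ν : ℕ → I.M) (L : Conj σ) : Prop :=
  ∀ l ∈ L, l.SatL I ν

end ASPMT

/-!
A step substitutes `t` for `x` using an equation `x = t` in which no variable of `t` depends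
on `x`; in particular `x ∉ t`, so `x` disappears and the finite set of variables shrinks
strictly, which gives termination. An edge `v → u` of the dependency graph of `D^x_t` is a path
`v → u` or `v → x → u` of that of `D`, so acyclicity survives a step, and so does the presence
of an isolating equation for every remaining variable. These two invariants give progress:
if `x = t` isolates `x` and some `u ∈ t` depended on `x`, the edge `x → u` would close a cycle.
Finally `ν ⊨ D^x_t` iff `ν[x ↦ t^ν] ⊨ D`, and a model of `D` already has `ν x = t^ν`, so a
step preserves satisfiability; a variable-free conjunction does not depend on the assignment.
-/

namespace ASPMT

variable {σ : Signature}

theorem updAssign_eq_self {α : Type} {ν : ℕ → α} {x : ℕ} {a : α} (h : ν x = a) :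
    updAssign ν x a = ν := by
  funext y
  by_cases hy : y = x <;> simp [updAssign, hy, h]

namespace Term

theorem vars_finite (t : Term σ) : t.vars.Finite := by
  induction t with
  | var x => exact Set.finite_singleton x
  | app f ts ih => exact Set.finite_iUnion ih

theorem eval_congr {I : Interp σ} {ν₁ ν₂ : ℕ → I.M} (t : Term σ)
    (h : ∀ x ∈ t.vars, ν₁ x = ν₂ x) : t.eval I ν₁ = t.eval I ν₂ := by
  induction t with
  | var x => exact h x rfl
  | app f ts ih =>
    simp only [eval]
    congr 1
    funext i
    exact ih i fun x hx => h x (Set.mem_iUnion.2 ⟨i, hx⟩)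

theorem eval_subst {I : Interp σ} (a : Term σ) (x : ℕ) (t : Term σ) (ν : ℕ → I.M) :
    (a.subst x t).eval I ν = a.eval I (updAssign ν x (t.eval I ν)) := by
  induction a with
  | var y => by_cases h : y = x <;> simp [subst, eval, updAssign, h]
  | app f ts ih => simp only [subst, eval, ih]

theorem mem_vars_subst {a t : Term σ} {x u : ℕ} :
    u ∈ (a.subst x t).vars ↔ u ∈ a.vars ∧ u ≠ x ∨ x ∈ a.vars ∧ u ∈ t.vars := by
  induction a with
  | var y =>
    by_cases h : y = x
    · subst h
      simp [subst, vars]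
    · simp only [subst, h, if_false, vars, Set.mem_singleton_iff]
      grind
  | app f ts ih =>
    simp only [subst, vars, Set.mem_iUnion, ih]
    grind

theorem subst_eq_var {c t : Term σ} {x v : ℕ} (h : c.subst x t = .var v) :
    c = .var v ∧ v ≠ x ∨ c = .var x ∧ t = .var v := by
  cases c with
  | var y => by_cases hy : y = x <;> grind [subst]
  | app f ts => simp [subst] at h

end Term

theorem Atom.satA_congr {I : Interp σ} {ν₁ ν₂ : ℕ → I.M} (a : Atom σ)
    (h : ∀ x ∈ a.vars, ν₁ x = ν₂ x) : a.SatA I ν₁ ↔ a.SatA I ν₂ := by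
  cases a with
  | eq b c =>
    simp only [SatA, vars, Set.mem_union] at h ⊢
    rw [b.eval_congr fun x hx => h x (.inl hx), c.eval_congr fun x hx => h x (.inr hx)]
  | pred p ts =>
    simp only [SatA, vars, Set.mem_iUnion] at h ⊢
    rw [funext fun i => (ts i).eval_congr fun x hx => h x ⟨i, hx⟩]

theorem Atom.satA_subst {I : Interp σ} (a : Atom σ) (x : ℕ) (t : Term σ) (ν : ℕ → I.M) :
    (a.subst x t).SatA I ν ↔ a.SatA I (updAssign ν x (t.eval I ν)) := by
  cases a <;> simp [subst, SatA, Term.eval_subst]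

theorem Atom.mem_vars_subst {a : Atom σ} {t : Term σ} {x u : ℕ} :
    u ∈ (a.subst x t).vars ↔ u ∈ a.vars ∧ u ≠ x ∨ x ∈ a.vars ∧ u ∈ t.vars := by
  cases a with
  | eq b c =>
    simp only [subst, vars, Set.mem_union, Term.mem_vars_subst]
    tauto
  | pred p ts =>
    simp only [subst, vars, Set.mem_iUnion, Term.mem_vars_subst]
    grind

theorem Lit.vars_finite (l : Lit σ) : l.vars.Finite := by
  cases h : l.atom with
  | eq a b => simpa [vars, h, Atom.vars] using a.vars_finite.union b.vars_finite
  | pred p ts => simpa [vars, h, Atom.vars] using Set.finite_iUnion fun i => (ts i).vars_finite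

theorem Lit.satL_congr {I : Interp σ} {ν₁ ν₂ : ℕ → I.M} (l : Lit σ)
    (h : ∀ x ∈ l.vars, ν₁ x = ν₂ x) : l.SatL I ν₁ ↔ l.SatL I ν₂ := by
  simp only [SatL, l.atom.satA_congr h]

theorem Lit.satL_subst {I : Interp σ} (l : Lit σ) (x : ℕ) (t : Term σ) (ν : ℕ → I.M) :
    (l.subst x t).SatL I ν ↔ l.SatL I (updAssign ν x (t.eval I ν)) := by
  simp only [SatL, subst, Atom.satA_subst]

theorem isolator_subst {l : Lit σ} {x y : ℕ} {t : Term σ} (hyx : y ≠ x) (h : isolator y l) :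
    isolator y (l.subst x t) := by
  obtain ⟨hpos, s, hs | hs⟩ := h <;>
    exact ⟨hpos, s.subst x t, by simp [Lit.subst, hs, Atom.subst, Term.subst, hyx]⟩

theorem conjVars_finite (L : Conj σ) : (conjVars L).Finite := by
  have : conjVars L = ⋃ l ∈ {l | l ∈ L}, l.vars := by ext; simp [conjVars]
  rw [this]
  exact L.finite_toSet.biUnion fun l _ => l.vars_finite

theorem satConj_congr {I : Interp σ} {ν₁ ν₂ : ℕ → I.M} {L : Conj σ}
    (h : ∀ x ∈ conjVars L, ν₁ x = ν₂ x) : SatConj I ν₁ L ↔ SatConj I ν₂ L :=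
  forall₂_congr fun l hl => l.satL_congr fun x hx => h x ⟨l, hl, hx⟩

theorem satConj_conjSubst {I : Interp σ} (L : Conj σ) (x : ℕ) (t : Term σ) (ν : ℕ → I.M) :
    SatConj I ν (conjSubst x t L) ↔ SatConj I (updAssign ν x (t.eval I ν)) L := by
  simp [SatConj, conjSubst, Lit.satL_subst]

theorem conjVars_conjSubst_subset (L : Conj σ) (x : ℕ) (t : Term σ) :
    conjVars (conjSubst x t L) ⊆ conjVars L \ {x} ∪ t.vars := by
  rintro u ⟨l', hl', hu⟩
  obtain ⟨l, hl, rfl⟩ := List.mem_map.1 hl'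
  rcases Atom.mem_vars_subst.1 hu with ⟨hul, hux⟩ | ⟨-, hut⟩
  · exact .inl ⟨⟨l, hl, hul⟩, hux⟩
  · exact .inr hut

def ContainsEq (L : Conj σ) (x : ℕ) (t : Term σ) : Prop :=
  ∃ l ∈ L, l.pos = true ∧ (l.atom = .eq (.var x) t ∨ l.atom = .eq t (.var x))

theorem depEdgeC_iff {L : Conj σ} {v u : ℕ} :
    depEdgeC L v u ↔ ∃ t, ContainsEq L v t ∧ u ∈ t.vars :=
  ⟨fun ⟨l, hl, hpos, t, ht, hu⟩ => ⟨t, ⟨l, hl, hpos, ht⟩, hu⟩,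
    fun ⟨t, ⟨l, hl, hpos, ht⟩, hu⟩ => ⟨l, hl, hpos, t, ht, hu⟩⟩

namespace ContainsEq

variable {L : Conj σ} {x : ℕ} {t : Term σ}

theorem depEdgeC (h : ContainsEq L x t) {u : ℕ} (hu : u ∈ t.vars) : depEdgeC L x u :=
  depEdgeC_iff.2 ⟨t, h, hu⟩

theorem symm_var {v : ℕ} (h : ContainsEq L x (.var v)) : ContainsEq L v (.var x) :=
  let ⟨l, hl, hpos, hform⟩ := h
  ⟨l, hl, hpos, hform.symm⟩

theorem notMem_vars (h : ContainsEq L x t) (hdep : ∀ u ∈ t.vars, ¬ dependsOn L u x) :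
    x ∉ t.vars :=
  fun hx => hdep x hx (.single (h.depEdgeC hx))

theorem vars_subset (h : ContainsEq L x t) : t.vars ⊆ conjVars L := by
  obtain ⟨l, hl, -, hform⟩ := h
  intro u hu
  refine ⟨l, hl, ?_⟩
  rcases hform with h | h <;> simp [Lit.vars, h, Atom.vars, hu]

theorem apply_eq_eval {I : Interp σ} {ν : ℕ → I.M} (h : ContainsEq L x t)
    (hν : SatConj I ν L) : ν x = t.eval I ν := by
  obtain ⟨l, hl, hpos, hform⟩ := h
  have := hν l hl
  rcases hform with h | h <;> simp [Lit.SatL, hpos, h, Atom.SatA, Term.eval] at this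
  · exact this
  · exact this.symm

theorem of_conjSubst {v : ℕ} {s : Term σ} (h : ContainsEq (conjSubst x t L) v s) :
    (∃ d, ContainsEq L v d ∧ d.subst x t = s) ∨ t = .var v := by
  obtain ⟨l', hl', hpos, hform⟩ := h
  obtain ⟨l, hl, rfl⟩ := List.mem_map.1 hl'
  obtain ⟨c, d, hcd, hc, hd⟩ : ∃ c d, (l.atom = .eq c d ∨ l.atom = .eq d c) ∧
      c.subst x t = .var v ∧ d.subst x t = s := by
    cases hatom : l.atom with
    | pred p ts => rcases hform with h | h <;> simp [Lit.subst, hatom, Atom.subst] at h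
    | eq a b =>
      rcases hform with h | h <;> simp only [Lit.subst, hatom, Atom.subst, Atom.eq.injEq] at h
      · exact ⟨a, b, .inl rfl, h⟩
      · exact ⟨b, a, .inr rfl, h.symm⟩
  rcases Term.subst_eq_var hc with ⟨rfl, -⟩ | ⟨-, ht⟩
  · exact .inl ⟨d, ⟨l, hl, hpos, hcd⟩, hd⟩
  · exact .inr ht

end ContainsEq

theorem conjVars_conjSubst_subset_diff {L : Conj σ} {x : ℕ} {t : Term σ} (h : ContainsEq L x t)
    (hdep : ∀ u ∈ t.vars, ¬ dependsOn L u x) : conjVars (conjSubst x t L) ⊆ conjVars L \ {x} :=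
  fun _ hu => (conjVars_conjSubst_subset L x t hu).elim id
    fun hut => ⟨h.vars_subset hut, fun hux => h.notMem_vars hdep (hux ▸ hut)⟩

theorem dependsOn_of_depEdgeC_conjSubst {L : Conj σ} {x : ℕ} {t : Term σ}
    (hxt : ContainsEq L x t) (hdep : ∀ u ∈ t.vars, ¬ dependsOn L u x) {v u : ℕ}
    (h : depEdgeC (conjSubst x t L) v u) : dependsOn L v u := by
  obtain ⟨s, hs, hu⟩ := depEdgeC_iff.1 h
  rcases hs.of_conjSubst with ⟨d, hd, rfl⟩ | rfl
  · rcases Term.mem_vars_subst.1 hu with ⟨hud, -⟩ | ⟨hxd, hut⟩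
    · exact .single (hd.depEdgeC hud)
    · exact .head (hd.depEdgeC hxd) (.single (hxt.depEdgeC hut))
  · exact absurd (.single (hxt.symm_var.depEdgeC rfl)) (hdep v rfl)

theorem exists_satConj_conjSubst_iff {I : Interp σ} {L : Conj σ} {x : ℕ} {t : Term σ}
    (hxt : ContainsEq L x t) :
    (∃ ν : ℕ → I.M, SatConj I ν (conjSubst x t L)) ↔ ∃ ν : ℕ → I.M, SatConj I ν L := by
  simp_rw [satConj_conjSubst]
  constructor
  · rintro ⟨ν, hν⟩
    exact ⟨_, hν⟩
  · rintro ⟨ν, hν⟩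
    exact ⟨ν, by rwa [updAssign_eq_self (hxt.apply_eq_eval hν)]⟩

def Isolated (L : Conj σ) : Prop := ∀ x ∈ conjVars L, ∃ l ∈ L, isolator x l

namespace SubstStep

variable {L L' : Conj σ}

theorem conjVars_ssubset (h : SubstStep L L') : conjVars L' ⊂ conjVars L := by
  obtain ⟨x, hx, t, hxt, hdep, rfl⟩ := h
  exact (conjVars_conjSubst_subset_diff hxt hdep).trans_ssubset (Set.sdiff_singleton_ssubset.2 hx)

theorem isolated (h : SubstStep L L') (hL : Isolated L) : Isolated L' := by
  obtain ⟨x, -, t, hxt, hdep, rfl⟩ := h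
  intro y hy
  obtain ⟨hyL, hyx⟩ := conjVars_conjSubst_subset_diff hxt hdep hy
  obtain ⟨l, hl, hiso⟩ := hL y hyL
  exact ⟨l.subst x t, List.mem_map_of_mem hl, isolator_subst hyx hiso⟩

theorem acyclicDeps (h : SubstStep L L') (hL : AcyclicDeps L) : AcyclicDeps L' := by
  obtain ⟨x, -, t, hxt, hdep, rfl⟩ := h
  exact fun v hv =>
    hL v (Relation.TransGen.closed (fun _ _ => dependsOn_of_depEdgeC_conjSubst hxt hdep) _ _ hv)

theorem exists_satConj_iff (h : SubstStep L L') (I : Interp σ) :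
    (∃ ν : ℕ → I.M, SatConj I ν L) ↔ ∃ ν : ℕ → I.M, SatConj I ν L' := by
  obtain ⟨x, -, t, hxt, -, rfl⟩ := h
  exact (exists_satConj_conjSubst_iff hxt).symm

end SubstStep

theorem wellFounded_flip_substStep : WellFounded (flip (SubstStep (σ := σ))) :=
  Subrelation.wf (fun h => Set.ncard_lt_ncard h.conjVars_ssubset (conjVars_finite _))
    (InvImage.wf (fun L => (conjVars L).ncard) wellFounded_lt)

theorem exists_substStep {L : Conj σ} (hiso : Isolated L) (hacyc : AcyclicDeps L)
    (hne : (conjVars L).Nonempty) : ∃ L', SubstStep L L' := by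
  obtain ⟨x, hx⟩ := hne
  obtain ⟨l, hl, hpos, t, hform⟩ := hiso x hx
  have hxt : ContainsEq L x t := ⟨l, hl, hpos, hform⟩
  exact ⟨_, x, hx, t, hxt, fun u hu hux => hacyc x (.head (hxt.depEdgeC hu) hux), rfl⟩

section Reachable

open Relation

variable {L L' : Conj σ}

theorem isolated_acyclicDeps_of_reflTransGen (h : ReflTransGen SubstStep L L')
    (hiso : Isolated L) (hacyc : AcyclicDeps L) : Isolated L' ∧ AcyclicDeps L' := by
  induction h with
  | refl => exact ⟨hiso, hacyc⟩
  | tail _ hstep ih => exact ⟨hstep.isolated ih.1, hstep.acyclicDeps ih.2⟩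

theorem exists_satConj_iff_of_reflTransGen (h : ReflTransGen SubstStep L L') (I : Interp σ) :
    (∃ ν : ℕ → I.M, SatConj I ν L) ↔ ∃ ν : ℕ → I.M, SatConj I ν L' := by
  induction h with
  | refl => rfl
  | tail _ hstep ih => exact ih.trans (hstep.exists_satConj_iff I)

end Reachable

/-- Let `D` be a conjunction of possibly negated atomic formulas such
that every variable occurring in `D` occurs in some non-negated conjunct of the form
`x = t` or `t = x`, and such that the variable dependency graph of `D` is acyclic.
Then the substitution process that, while some variable `x` remains in `D`, selects
a non-negated conjunct `x = t` or `t = x` of `D` such that no variable occurring in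
`t` depends on `x` and replaces `D` by `D^x_t`, terminates after finitely many steps
in a formula containing no variables, and the existential closure of `D` is
logically equivalent to the resulting variable-free formula. -/
theorem subst_process_conj {σ : Signature} (D : Conj σ)
    (hiso : ∀ x ∈ conjVars D, ∃ l ∈ D, isolator x l)
    (hacyc : AcyclicDeps D) :
    -- the process terminates: there is no infinite sequence of substitution steps
    (¬ ∃ g : ℕ → Conj σ, g 0 = D ∧ ∀ n, SubstStep (g n) (g (n + 1))) ∧
    -- progress: as long as a variable remains, a substitution step applies
    (∀ D', Relation.ReflTransGen SubstStep D D' → conjVars D' ≠ ∅ →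
      ∃ D'', SubstStep D' D'') ∧
    -- any variable-free result is logically equivalent to the ∃-closure of `D`
    (∀ D', Relation.ReflTransGen SubstStep D D' → conjVars D' = ∅ →
      ∀ (I : Interp σ) (ν' : ℕ → I.M),
        ((∃ ν : ℕ → I.M, SatConj I ν D) ↔ SatConj I ν' D')) := by
  refine ⟨fun ⟨g, _, hg⟩ =>
    (wellFounded_iff_isEmpty_descending_chain.1 wellFounded_flip_substStep).elim ⟨g, hg⟩, ?_, ?_⟩
  · intro D' hD' hne
    obtain ⟨hiso', hacyc'⟩ := isolated_acyclicDeps_of_reflTransGen hD' hiso hacyc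
    exact exists_substStep hiso' hacyc' (Set.nonempty_iff_ne_empty.2 hne)
  · intro D' hD' hclosed I ν'
    rw [exists_satConj_iff_of_reflTransGen hD']
    exact ⟨fun ⟨ν, hν⟩ => (satConj_congr (by simp [hclosed])).1 hν, fun h => ⟨ν', h⟩⟩

end ASPMT
end
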